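/- arXiv:1304.7751 — 2 statements merged into one kernel-verified Lean document; each statement's English description precedes it below -/
import Mathlib

section
/- Let n ≥ m ≥ k ≥ 1 be integers and let B be an m×n complex matrix satisfying B B* = I_m, where B* denotes the conjugate transpose. Then for every real ε > 0, the sum over all k-element subsets s of {1,…,n} of det(ε·I_k + B_s* B_s) equals ∑_{l=0}^{k} C(n−l, k−l) · C(m, l) · ε^{k−l}. (Each matrix ε·I_k + B_s* B_s is Hermitian positive definite, so each determinant is a positive real number.) -/
open Matrix Finset

/-- The `m × k` submatrix of an `m × n` matrix `B` consisting of the columns of `B`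
indexed by the subset `s`. -/
def colSubmatrix {m n : ℕ} (B : Matrix (Fin m) (Fin n) ℂ) (s : Finset (Fin n)) :
    Matrix (Fin m) {j // j ∈ s} ℂ :=
  Matrix.of fun i j => B i (j : Fin n)

/-!
Expanding `det (ε • 1 + M)` in the principal minors of `M`, and noting that the principal minors
of `Bₛᴴ Bₛ` are those of `G = Bᴴ B` on subsets of `s`, the left side becomes
`∑ₗ ε^(k-l) C(n-l, k-l) Eₗ(G)`, where `Eₗ(G)` is the sum of the `l × l` principal minors of `G`
(an `l`-set lies in `C(n-l, k-l)` of the `k`-sets). The coefficients of a characteristic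
polynomial are the signed `Eₗ`, and `χ(Bᴴ B) = X^(n-m) χ(B Bᴴ) = X^(n-m) (X-1)^m`,
so `Eₗ(G) = C(m, l)`.
-/

open Polynomial

theorem Finset.sum_powersetCard_sum_powersetCard {α M : Type*} [DecidableEq α] [AddCommMonoid M]
    (s : Finset α) (f : Finset α → M) {j k : ℕ} (hjk : j ≤ k) :
    ∑ u ∈ s.powersetCard k, ∑ t ∈ u.powersetCard j, f t
      = (#s - j).choose (k - j) • ∑ t ∈ s.powersetCard j, f t := by
  rw [sum_comm' (t' := s.powersetCard j) (s' := fun t => (s.powersetCard k).filter (t ⊆ ·))]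
  · rw [smul_sum]
    refine sum_congr rfl fun t ht => ?_
    obtain ⟨hts, rfl⟩ := mem_powersetCard.1 ht
    rw [sum_const, card_filter_powersetCard_subset t s k hts hjk]
  · intro u t
    simp only [mem_powersetCard, mem_filter]
    constructor
    · rintro ⟨hu, htu, htj⟩
      exact ⟨⟨hu, htu⟩, htu.trans hu.1, htj⟩
    · rintro ⟨⟨hu, htu⟩, -, htj⟩
      exact ⟨hu, htu, htj⟩

theorem Polynomial.coeff_X_pow_mul_X_sub_one_pow {R : Type*} [CommRing R] {a m j : ℕ}
    (hj : j ≤ a + m) :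
    (X ^ a * (X - 1) ^ m : R[X]).coeff (a + m - j) = (-1) ^ j * m.choose j := by
  rw [coeff_X_pow_mul', sub_eq_add_neg, ← C_1, ← C_neg, coeff_X_add_C_pow]
  split_ifs with h
  · have hjm : j ≤ m := by omega
    rw [show a + m - j - a = m - j by omega, Nat.sub_sub_self hjm, Nat.choose_symm hjm]
  · rw [Nat.choose_eq_zero_of_lt (by omega), Nat.cast_zero, mul_zero]

namespace Matrix

variable {ι κ R : Type*} [DecidableEq ι] [CommRing R]

def principalMinor (M : Matrix ι ι R) (t : Finset ι) : R :=
  (M.submatrix (Subtype.val : t → ι) Subtype.val).det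

theorem principalMinor_neg (M : Matrix ι ι R) (t : Finset ι) :
    (-M).principalMinor t = (-1) ^ #t * M.principalMinor t := by
  simp only [principalMinor, submatrix_neg, Pi.neg_apply, det_neg, Fintype.card_coe]

theorem principalMinor_submatrix [DecidableEq κ] (M : Matrix ι ι R) (f : κ ↪ ι) (t : Finset κ) :
    (M.submatrix f f).principalMinor t = M.principalMinor (t.map f) := by
  rw [principalMinor, principalMinor, ← det_submatrix_equiv_self (t.equivMap f)]
  rfl

theorem sum_principalMinor_submatrix_subtype (M : Matrix ι ι R) (s : Finset ι) (j : ℕ) :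
    ∑ t ∈ univ.powersetCard j, (M.submatrix (Subtype.val : s → ι) Subtype.val).principalMinor t
      = ∑ t ∈ s.powersetCard j, M.principalMinor t := by
  calc _ = ∑ t ∈ s.attach.powersetCard j, M.principalMinor (t.map (Function.Embedding.subtype _)) :=
        sum_congr (by rw [univ_eq_attach]) fun t _ => principalMinor_submatrix M _ t
    _ = _ := by
      conv_rhs => rw [← attach_map_val (s := s), powersetCard_map, sum_map]
      rfl

variable [Fintype ι]

theorem charpoly_coeff_eq_sum_principalMinor (M : Matrix ι ι R) {j : ℕ}
    (hj : j ≤ Fintype.card ι) :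
    M.charpoly.coeff (Fintype.card ι - j)
      = (-1) ^ j * ∑ t ∈ univ.powersetCard j, M.principalMinor t :=
  charpoly_coeff_eq_sum_minors M j hj

theorem det_smul_one_add_eq_sum_principalMinor (x : R) (M : Matrix ι ι R) :
    (x • (1 : Matrix ι ι R) + M).det
      = ∑ j ∈ range (Fintype.card ι + 1),
          x ^ (Fintype.card ι - j) * ∑ t ∈ univ.powersetCard j, M.principalMinor t := by
  nontriviality R
  have hdet : (x • (1 : Matrix ι ι R) + M).det = (-M).charpoly.eval x := by
    rw [eval_charpoly, sub_neg_eq_add, smul_one_eq_diagonal, scalar_apply]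
  rw [hdet, eval_eq_sum_range, charpoly_natDegree_eq_dim, ← sum_range_reflect]
  refine sum_congr rfl fun j hj => ?_
  have hj : j ≤ Fintype.card ι := Nat.lt_succ_iff.1 (mem_range.1 hj)
  rw [add_tsub_cancel_right, charpoly_coeff_eq_sum_principalMinor _ hj, mul_comm]
  congr 1
  rw [mul_sum]
  refine sum_congr rfl fun t ht => ?_
  rw [principalMinor_neg, (mem_powersetCard.1 ht).2, ← mul_assoc, ← mul_pow, neg_one_mul,
    neg_neg, one_pow, one_mul]

theorem sum_principalMinor_mul_eq_choose [Fintype κ] [DecidableEq κ] {A : Matrix κ ι R}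
    {C : Matrix ι κ R} (hAC : A * C = 1) (hle : Fintype.card κ ≤ Fintype.card ι) (j : ℕ) :
    ∑ t ∈ univ.powersetCard j, (C * A).principalMinor t = (Fintype.card κ).choose j := by
  by_cases hj : j ≤ Fintype.card ι
  · have hcharpoly : (C * A).charpoly
        = X ^ (Fintype.card ι - Fintype.card κ) * (X - 1) ^ Fintype.card κ := by
      rw [charpoly_mul_comm_of_le C A hle, hAC, charpoly_one]
    have hcoeff := charpoly_coeff_eq_sum_principalMinor (C * A) hj
    rw [hcharpoly, show Fintype.card ι - j = Fintype.card ι - Fintype.card κ + Fintype.card κ - j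
      by omega, coeff_X_pow_mul_X_sub_one_pow (by omega)] at hcoeff
    exact ((isUnit_neg_one.pow j).mul_left_cancel hcoeff).symm
  · rw [powersetCard_eq_empty.2 (by simpa using hj), sum_empty,
      Nat.choose_eq_zero_of_lt (hle.trans_lt (not_le.1 hj)), Nat.cast_zero]

end Matrix

theorem conjTranspose_colSubmatrix_mul_colSubmatrix {m n : ℕ} (B : Matrix (Fin m) (Fin n) ℂ)
    (s : Finset (Fin n)) :
    (colSubmatrix B s)ᴴ * colSubmatrix B s = (Bᴴ * B).submatrix Subtype.val Subtype.val := by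
  rw [submatrix_mul _ _ _ id _ Function.bijective_id]
  rfl

theorem sum_det_eps_add_conjTranspose_mul_submatrix_general
    (n m k : ℕ) (hmn : m ≤ n)
    (B : Matrix (Fin m) (Fin n) ℂ) (hB : B * Bᴴ = 1)
    (ε : ℝ) :
    ∑ s ∈ Finset.univ.powersetCard k,
        ((ε : ℂ) • 1 + (colSubmatrix B s)ᴴ * colSubmatrix B s).det
      = ∑ l ∈ Finset.range (k + 1),
          ((n - l).choose (k - l) : ℂ) * (m.choose l : ℂ) * (ε : ℂ) ^ (k - l) := by
  calc _ = ∑ s ∈ univ.powersetCard k, ∑ l ∈ range (k + 1),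
          (ε : ℂ) ^ (k - l) * ∑ t ∈ s.powersetCard l, (Bᴴ * B).principalMinor t := by
        refine sum_congr rfl fun s hs => ?_
        rw [conjTranspose_colSubmatrix_mul_colSubmatrix, det_smul_one_add_eq_sum_principalMinor,
          Fintype.card_coe, (mem_powersetCard.1 hs).2]
        simp only [sum_principalMinor_submatrix_subtype]
    _ = ∑ l ∈ range (k + 1), (ε : ℂ) ^ (k - l) *
          ∑ s ∈ univ.powersetCard k, ∑ t ∈ s.powersetCard l, (Bᴴ * B).principalMinor t := by
        rw [sum_comm]
        simp only [mul_sum]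
    _ = _ := by
      refine sum_congr rfl fun l hl => ?_
      rw [sum_powersetCard_sum_powersetCard _ _ (Nat.lt_succ_iff.1 (mem_range.1 hl)),
        sum_principalMinor_mul_eq_choose hB (by simpa using hmn), card_univ, nsmul_eq_mul]
      simp only [Fintype.card_fin]
      ring

/-- For `n ≥ m ≥ k ≥ 1` and an `m × n` complex matrix `B` with
`B Bᴴ = I`, for every `ε > 0` the sum over all `k`-element subsets `s` of the columns of
`det (ε • I + Bₛᴴ Bₛ)` equals `∑_{l=0}^{k} C(n-l, k-l) C(m, l) ε^(k-l)`. -/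
theorem sum_det_eps_add_conjTranspose_mul_submatrix
    (n m k : ℕ) (hk : 1 ≤ k) (hkm : k ≤ m) (hmn : m ≤ n)
    (B : Matrix (Fin m) (Fin n) ℂ) (hB : B * Bᴴ = 1)
    (ε : ℝ) (hε : 0 < ε) :
    ∑ s ∈ Finset.univ.powersetCard k,
        ((ε : ℂ) • 1 + (colSubmatrix B s)ᴴ * colSubmatrix B s).det
      = ∑ l ∈ Finset.range (k + 1),
          ((n - l).choose (k - l) : ℂ) * (m.choose l : ℂ) * (ε : ℂ) ^ (k - l) :=
  sum_det_eps_add_conjTranspose_mul_submatrix_general n m k hmn B hB ε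
end

section
/- Let m ≤ n be positive integers and let A be an m×n random matrix whose entries are jointly independent real random variables with mean zero and variance one. Then E[ det((1/n)·A Aᵀ) ] = (m!/n^m)·C(n,m). -/
open Matrix Finset MeasureTheory ProbabilityTheory

open Equiv Function

/-!
Expanding `det (A Aᵀ)` by the Leibniz formula and multilinearity writes it as
`∑ p : Fin m → Fin n, ∑ σ, sign σ * ∏ i, A i (p (σ i)) * ∏ i, A i (p i)`.
Since the entries are independent, centred and of unit variance, each such monomial has
expectation `1` if `p ∘ σ = p` and `0` otherwise. For fixed `p` the signs of the permutations
fixing `p` cancel unless `p` is injective (composing with a transposition of two points with the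
same image reverses the sign), so `E[det (A Aᵀ)]` counts the injections `Fin m → Fin n`, of which
there are `n.descFactorial m = m! * n.choose m`.
-/

section Permutations

variable {α β : Type*} [Fintype α] [DecidableEq α] [DecidableEq β]

theorem sum_sign_filter_comp_eq_self (p : α → β) :
    ∑ σ ∈ univ.filter (fun σ : Perm α => p ∘ σ = p), (Perm.sign σ : ℤ) =
      if Injective p then 1 else 0 := by
  split_ifs with hp
  · have hstab : univ.filter (fun σ : Perm α => p ∘ σ = p) = {1} := by
      ext σ
      simp only [mem_filter, mem_univ, true_and, mem_singleton]
      refine ⟨fun h => Perm.ext fun x => hp (congrFun h x), ?_⟩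
      rintro rfl
      rfl
    simp [hstab]
  · -- Composing with the swap of two points with the same image is a sign-reversing involution.
    obtain ⟨a, b, hab, hne⟩ := not_injective_iff.mp hp
    refine sum_involution (fun σ _ => σ * swap a b) (fun σ _ => ?_) (fun σ _ _ => ?_)
      (fun σ hσ => ?_) (fun σ _ => mul_swap_involutive a b σ)
    · simp [Perm.sign_mul, Perm.sign_swap hne]
    · exact mul_swap_eq_iff.not.mpr hne
    · simp only [mem_filter, mem_univ, true_and] at hσ ⊢
      rw [Perm.coe_mul, ← comp_assoc, hσ]
      exact funext (apply_swap_eq_self hab)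

theorem card_filter_injective [Fintype β] :
    #(univ.filter (fun p : α → β => Injective p)) =
      (Fintype.card β).descFactorial (Fintype.card α) := by
  rw [← Fintype.card_embedding_eq, ← Fintype.card_subtype]
  exact Fintype.card_congr (subtypeInjectiveEquivEmbedding α β)

end Permutations

section MatrixExpansion

variable {ι κ R : Type*} [Fintype ι] [Fintype κ]

theorem prod_apply_eq_prod_ite [DecidableEq κ] [CommMonoid R] (M : Matrix ι κ R) (a : ι → κ) :
    ∏ i, M i (a i) = ∏ q : ι × κ, if a q.1 = q.2 then M q.1 q.2 else 1 := by
  rw [Fintype.prod_prod_type]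
  exact prod_congr rfl fun i _ =>
    ((prod_ite_eq univ (a i) (M i)).trans (if_pos (mem_univ _))).symm

theorem det_mul_transpose_eq_sum [DecidableEq ι] [CommRing R] (A : Matrix ι κ R) :
    (A * Aᵀ).det = ∑ p : ι → κ, ∑ σ : Perm ι,
      (Perm.sign σ : R) * ((∏ i, A i (p (σ i))) * ∏ i, A i (p i)) := by
  have hrow (σ : Perm ι) (p : ι → κ) : ∏ i, A (σ i) (p i) = ∏ i, A i (p (σ⁻¹ i)) := by
    simpa using Equiv.prod_comp σ fun i => A i (p (σ⁻¹ i))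
  calc (A * Aᵀ).det
      = ∑ σ : Perm ι, ∑ p : ι → κ,
          (Perm.sign σ : R) * ((∏ i, A (σ i) (p i)) * ∏ i, A i (p i)) := by
        simp only [det_apply', mul_apply, transpose_apply, prod_univ_sum, Fintype.piFinset_univ,
          mul_sum, prod_mul_distrib]
    _ = ∑ σ : Perm ι, ∑ p : ι → κ,
          (Perm.sign σ⁻¹ : R) * ((∏ i, A i (p (σ⁻¹ i))) * ∏ i, A i (p i)) := by
        simp only [hrow, Perm.sign_inv]
    _ = ∑ σ : Perm ι, ∑ p : ι → κ,
          (Perm.sign σ : R) * ((∏ i, A i (p (σ i))) * ∏ i, A i (p i)) :=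
        Equiv.sum_comp (Equiv.inv _)
          fun σ => ∑ p : ι → κ, (Perm.sign σ : R) * ((∏ i, A i (p (σ i))) * ∏ i, A i (p i))
    _ = _ := sum_comm

theorem prod_apply_mul_prod_apply_eq_prod_ite [DecidableEq κ] [CommMonoid R] (M : Matrix ι κ R)
    (a b : ι → κ) :
    (∏ i, M i (a i)) * ∏ i, M i (b i) =
      ∏ q : ι × κ,
        (if a q.1 = q.2 then M q.1 q.2 else 1) * (if b q.1 = q.2 then M q.1 q.2 else 1) := by
  rw [prod_apply_eq_prod_ite M a, prod_apply_eq_prod_ite M b, ← prod_mul_distrib]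

end MatrixExpansion

section RandomMatrix

variable {Ω : Type*} {mΩ : MeasurableSpace Ω} {μ : Measure Ω}

theorem ProbabilityTheory.iIndepFun.integrable_finsetProd {ι 𝕜 : Type*} [RCLike 𝕜]
    {X : ι → Ω → 𝕜} (hX : iIndepFun X μ) (hint : ∀ i, Integrable (X i) μ) (s : Finset ι) :
    Integrable (∏ i ∈ s, X i) μ := by
  have := hX.isProbabilityMeasure
  induction s using Finset.cons_induction with
  | empty => exact integrable_const 1
  | cons j s hj ih =>
    have hindep : IndepFun (X j) (∏ i ∈ s, X i) μ :=
      (hX.indepFun_finsetProd_of_notMem₀ (fun i => (hint i).aemeasurable) hj).symm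
    rw [prod_cons]
    exact hindep.integrable_mul (hint j) ih

variable [IsProbabilityMeasure μ] {X : Ω → ℝ}

theorem MeasureTheory.MemLp.integrable_ite_mul_ite (hX : MemLp X 2 μ) (P Q : Prop)
    [Decidable P] [Decidable Q] :
    Integrable (fun ω => (if P then X ω else 1) * (if Q then X ω else 1)) μ := by
  by_cases hP : P <;> by_cases hQ : Q <;> simp only [hP, hQ, if_true, if_false, mul_one, one_mul]
  · simpa [sq] using hX.integrable_sq
  · exact hX.integrable one_le_two
  · exact hX.integrable one_le_two
  · exact integrable_const 1

theorem integral_ite_mul_ite (hmean : ∫ ω, X ω ∂μ = 0) (hsq : ∫ ω, X ω ^ 2 ∂μ = 1)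
    (P Q : Prop) [Decidable P] [Decidable Q] :
    ∫ ω, (if P then X ω else 1) * (if Q then X ω else 1) ∂μ = if (P ↔ Q) then 1 else 0 := by
  by_cases hP : P <;> by_cases hQ : Q <;> simp [hP, hQ, hmean, ← sq, hsq]

variable {ι κ : Type*} [Fintype ι] [Fintype κ] [DecidableEq κ] {A : Ω → Matrix ι κ ℝ}

theorem integrable_prod_apply_mul_prod_apply
    (hindep : iIndepFun (fun (q : ι × κ) ω => A ω q.1 q.2) μ)
    (hL2 : ∀ i j, MemLp (fun ω => A ω i j) 2 μ) (a b : ι → κ) :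
    Integrable (fun ω => (∏ i, A ω i (a i)) * ∏ i, A ω i (b i)) μ := by
  have hfactor := hindep.comp
    (fun q x => (if a q.1 = q.2 then x else 1) * (if b q.1 = q.2 then x else 1))
    fun q => by split_ifs <;> fun_prop
  have := hfactor.integrable_finsetProd
    (fun q => (hL2 q.1 q.2).integrable_ite_mul_ite (a q.1 = q.2) (b q.1 = q.2)) univ
  simpa only [prod_fn, comp_def, ← prod_apply_mul_prod_apply_eq_prod_ite] using this

theorem integral_prod_apply_mul_prod_apply
    (hindep : iIndepFun (fun (q : ι × κ) ω => A ω q.1 q.2) μ)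
    (hL2 : ∀ i j, MemLp (fun ω => A ω i j) 2 μ) (hmean : ∀ i j, ∫ ω, A ω i j ∂μ = 0)
    (hvar : ∀ i j, variance (fun ω => A ω i j) μ = 1) (a b : ι → κ) :
    ∫ ω, (∏ i, A ω i (a i)) * ∏ i, A ω i (b i) ∂μ = if a = b then 1 else 0 := by
  have hsq (i : ι) (j : κ) : ∫ ω, A ω i j ^ 2 ∂μ = 1 := by
    have := variance_eq_sub (hL2 i j)
    rw [hvar i j, hmean i j] at this
    simpa using this.symm
  have hgraph : (∀ q : ι × κ, a q.1 = q.2 ↔ b q.1 = q.2) ↔ a = b :=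
    ⟨fun h => funext fun i => ((h (i, a i)).mp rfl).symm, fun h q => h ▸ Iff.rfl⟩
  simp_rw [prod_apply_mul_prod_apply_eq_prod_ite]
  rw [hindep.integral_fun_prod_comp
    (f := fun q x => (if a q.1 = q.2 then x else 1) * (if b q.1 = q.2 then x else 1))
    (fun q => (hL2 q.1 q.2).aestronglyMeasurable.aemeasurable)
    fun q => (by split_ifs <;> fun_prop : Measurable _).aestronglyMeasurable]
  simp only [integral_ite_mul_ite (hmean _ _) (hsq _ _), prod_boole, mem_univ, true_implies,
    hgraph]

theorem integral_det_mul_transpose [DecidableEq ι]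
    (hindep : iIndepFun (fun (q : ι × κ) ω => A ω q.1 q.2) μ)
    (hL2 : ∀ i j, MemLp (fun ω => A ω i j) 2 μ) (hmean : ∀ i j, ∫ ω, A ω i j ∂μ = 0)
    (hvar : ∀ i j, variance (fun ω => A ω i j) μ = 1) :
    ∫ ω, (A ω * (A ω)ᵀ).det ∂μ = (Fintype.card κ).descFactorial (Fintype.card ι) := by
  have hint (p : ι → κ) (σ : Perm ι) :
      Integrable (fun ω => (∏ i, A ω i (p (σ i))) * ∏ i, A ω i (p i)) μ :=
    integrable_prod_apply_mul_prod_apply hindep hL2 (p ∘ σ) p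
  have hmoment (p : ι → κ) (σ : Perm ι) :
      ∫ ω, (∏ i, A ω i (p (σ i))) * ∏ i, A ω i (p i) ∂μ = if p ∘ σ = p then 1 else 0 :=
    integral_prod_apply_mul_prod_apply hindep hL2 hmean hvar (p ∘ σ) p
  calc ∫ ω, (A ω * (A ω)ᵀ).det ∂μ
      = ∑ p : ι → κ, ∑ σ : Perm ι,
          (Perm.sign σ : ℝ) * ∫ ω, (∏ i, A ω i (p (σ i))) * ∏ i, A ω i (p i) ∂μ := by
        simp only [det_mul_transpose_eq_sum]
        rw [integral_finsetSum _ fun p _ => integrable_finsetSum _ fun σ _ =>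
          (hint p σ).const_mul _]
        refine sum_congr rfl fun p _ => ?_
        rw [integral_finsetSum _ fun σ _ => (hint p σ).const_mul _]
        simp only [integral_const_mul]
    _ = ∑ p : ι → κ,
          ∑ σ ∈ univ.filter (fun σ : Perm ι => p ∘ σ = p), (Perm.sign σ : ℝ) := by
        simp only [hmoment, mul_boole, sum_filter]
    _ = ∑ p : ι → κ, if Injective p then (1 : ℝ) else 0 := by
        simp only [← Int.cast_sum, sum_sign_filter_comp_eq_self]
        push_cast
        rfl
    _ = (Fintype.card κ).descFactorial (Fintype.card ι) := by
        rw [sum_boole, card_filter_injective]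

end RandomMatrix

theorem expected_det_rectangular_general
    (m n : ℕ)
    (Ω : Type) [MeasureSpace Ω] [IsProbabilityMeasure (ℙ : Measure Ω)]
    (A : Ω → Matrix (Fin m) (Fin n) ℝ)
    (hL2 : ∀ i j, MemLp (fun ω => A ω i j) 2 ℙ)
    (hindep : iIndepFun
      (fun (q : Fin m × Fin n) ω => A ω q.1 q.2) ℙ)
    (hmean : ∀ i j, ∫ ω, A ω i j ∂ℙ = 0)
    (hvar : ∀ i j, variance (fun ω => A ω i j) ℙ = 1) :
    (∫ ω, (((n : ℝ)⁻¹ • (A ω * (A ω)ᵀ)).det) ∂ℙ)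
      = (m.factorial : ℝ) / (n : ℝ) ^ m * (n.choose m : ℝ) := by
  calc ∫ ω, ((n : ℝ)⁻¹ • (A ω * (A ω)ᵀ)).det ∂ℙ
      = (n : ℝ)⁻¹ ^ m * ∫ ω, (A ω * (A ω)ᵀ).det ∂ℙ := by
        simp only [det_smul, Fintype.card_fin, integral_const_mul]
    _ = (n : ℝ)⁻¹ ^ m * n.descFactorial m := by
        rw [integral_det_mul_transpose hindep hL2 hmean hvar, Fintype.card_fin, Fintype.card_fin]
    _ = (m.factorial : ℝ) / (n : ℝ) ^ m * (n.choose m : ℝ) := by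
        rw [Nat.descFactorial_eq_factorial_mul_choose]
        push_cast
        ring

/-- For positive integers `m ≤ n` and an `m × n` random matrix `A`
whose entries are jointly independent with mean zero and unit variance (and finite
second moment), `E[det((1/n) A Aᵀ)] = (m!/n^m) C(n,m)`. -/
theorem expected_det_rectangular
    (m n : ℕ) (hm : 1 ≤ m) (hmn : m ≤ n)
    (Ω : Type) [MeasureSpace Ω] [IsProbabilityMeasure (ℙ : Measure Ω)]
    (A : Ω → Matrix (Fin m) (Fin n) ℝ)
    (hmeas : ∀ i j, Measurable fun ω => A ω i j)
    (hL2 : ∀ i j, MemLp (fun ω => A ω i j) 2 ℙ)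
    (hindep : iIndepFun
      (fun (q : Fin m × Fin n) ω => A ω q.1 q.2) ℙ)
    (hmean : ∀ i j, ∫ ω, A ω i j ∂ℙ = 0)
    (hvar : ∀ i j, variance (fun ω => A ω i j) ℙ = 1) :
    (∫ ω, (((n : ℝ)⁻¹ • (A ω * (A ω)ᵀ)).det) ∂ℙ)
      = (m.factorial : ℝ) / (n : ℝ) ^ m * (n.choose m : ℝ) :=
  expected_det_rectangular_general m n Ω A hL2 hindep hmean hvar
end
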